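/- Let d ≥ 1, let z_i, z_j : [η_{k-1}, η_k] → ℝ^d be affine functions on an interval with η_{k-1} < η_k, i.e. z((1−s)η_{k-1} + sη_k) = (1−s)z(η_{k-1}) + s z(η_k) for s ∈ [0,1]. Set Δ₀ = z_i(η_{k-1}) − z_j(η_{k-1}) and Δ₁ = z_i(η_k) − z_j(η_k), and assume Δ₀ ≠ Δ₁. Then for every β ∈ ℝ, ∫_{η_{k-1}}^{η_k} exp(β − ‖z_i(s) − z_j(s)‖²) ds = (η_k − η_{k-1}) · exp(β − a) · σ · √(2π) · (Φ((1−μ)/σ) − Φ(−μ/σ)), where σ = 1/(√2 ‖Δ₀ − Δ₁‖), μ = ⟨Δ₀, Δ₀ − Δ₁⟩ / ‖Δ₀ − Δ₁‖², and a = ‖Δ₀‖² − ⟨Δ₀, Δ₀ − Δ₁⟩² / ‖Δ₀ − Δ₁‖². -/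

import Mathlib

open MeasureTheory RealInnerProductSpace

/-- The standard normal cumulative distribution function
`Φ(u) = (1/√(2π)) ∫_{-∞}^u exp(-s²/2) ds`. -/
noncomputable def stdNormalCDF (u : ℝ) : ℝ :=
  (Real.sqrt (2 * Real.pi))⁻¹ * ∫ s in Set.Iic u, Real.exp (-s ^ 2 / 2)

/-- **Closed form of the cumulative Poisson rate of the CLPM** (Statement 0):
if `z_i, z_j : [η₀, η₁] → ℝ^d` are affine on the interval `[η₀, η₁]` and the endpoint
differences `Δ₀ = z_i(η₀) − z_j(η₀)` and `Δ₁ = z_i(η₁) − z_j(η₁)` are distinct, then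
`∫_{η₀}^{η₁} exp(β − ‖z_i(s) − z_j(s)‖²) ds
  = (η₁ − η₀)·exp(β − a)·σ·√(2π)·(Φ((1−μ)/σ) − Φ(−μ/σ))`. -/
theorem clpm_cumulative_rate_closed_form (d : ℕ) (hd : 1 ≤ d)
    (η₀ η₁ : ℝ) (hη : η₀ < η₁)
    (zi zj : ℝ → EuclideanSpace ℝ (Fin d))
    (hzi : ∀ s ∈ Set.Icc (0:ℝ) 1,
      zi ((1 - s) * η₀ + s * η₁) = (1 - s) • zi η₀ + s • zi η₁)
    (hzj : ∀ s ∈ Set.Icc (0:ℝ) 1,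
      zj ((1 - s) * η₀ + s * η₁) = (1 - s) • zj η₀ + s • zj η₁)
    (Δ₀ Δ₁ : EuclideanSpace ℝ (Fin d))
    (hΔ₀ : Δ₀ = zi η₀ - zj η₀) (hΔ₁ : Δ₁ = zi η₁ - zj η₁) (hne : Δ₀ ≠ Δ₁)
    (σ μ a : ℝ)
    (hσ : σ = 1 / (Real.sqrt 2 * ‖Δ₀ - Δ₁‖))
    (hμ : μ = ⟪Δ₀, Δ₀ - Δ₁⟫ / ‖Δ₀ - Δ₁‖ ^ 2)
    (ha : a = ‖Δ₀‖ ^ 2 - ⟪Δ₀, Δ₀ - Δ₁⟫ ^ 2 / ‖Δ₀ - Δ₁‖ ^ 2) :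
    ∀ β : ℝ,
      ∫ s in η₀..η₁, Real.exp (β - ‖zi s - zj s‖ ^ 2) =
        (η₁ - η₀) * Real.exp (β - a) * σ * Real.sqrt (2 * Real.pi) *
          (stdNormalCDF ((1 - μ) / σ) - stdNormalCDF (-μ / σ)) := by
  intro β
  set c : ℝ := ‖Δ₀ - Δ₁‖ ^ 2 with hc_def
  have hΔne : Δ₀ - Δ₁ ≠ 0 := sub_ne_zero.mpr hne
  have hnorm_pos : 0 < ‖Δ₀ - Δ₁‖ := norm_pos_iff.mpr hΔne
  have hc : 0 < c := by positivity
  have hσpos : 0 < σ := by rw [hσ]; positivity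
  have hσsq : σ ^ 2 = 1 / (2 * c) := by
    rw [hσ, hc_def]
    rw [div_pow, mul_pow, Real.sq_sqrt (by norm_num : (2:ℝ) ≥ 0)]
    norm_num
  -- pointwise quadratic identity
  have hquad : ∀ s : ℝ, ‖(1 - s) • Δ₀ + s • Δ₁‖ ^ 2 = c * (s - μ) ^ 2 + a := by
    intro s
    have h1 : (1 - s) • Δ₀ + s • Δ₁ = Δ₀ + s • (Δ₁ - Δ₀) := by
      rw [smul_sub, sub_smul, one_smul]; abel
    have h2 : ⟪Δ₀, Δ₁ - Δ₀⟫ = -⟪Δ₀, Δ₀ - Δ₁⟫ := by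
      rw [← neg_sub Δ₀ Δ₁, inner_neg_right]
    rw [h1, @norm_add_sq_real, real_inner_smul_right, h2, norm_smul,
      norm_sub_rev Δ₁ Δ₀, mul_pow, Real.norm_eq_abs, sq_abs]
    rw [hμ, ha, ← hc_def]
    field_simp
    ring
  -- step A : substitution t = (η₁ - η₀) s + η₀
  have hne' : η₁ - η₀ ≠ 0 := sub_ne_zero.mpr hη.ne'
  have hA : (∫ t in η₀..η₁, Real.exp (β - ‖zi t - zj t‖ ^ 2))
      = (η₁ - η₀) * ∫ s in (0:ℝ)..1, Real.exp (β - a - c * (s - μ) ^ 2) := by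
    have := intervalIntegral.integral_comp_mul_add (a := 0) (b := 1)
      (fun t => Real.exp (β - ‖zi t - zj t‖ ^ 2)) hne' η₀
    have hb0 : (η₁ - η₀) * 0 + η₀ = η₀ := by ring
    have hb1 : (η₁ - η₀) * 1 + η₀ = η₁ := by ring
    rw [hb0, hb1, smul_eq_mul] at this
    have hcong : (∫ s in (0:ℝ)..1, Real.exp (β - a - c * (s - μ) ^ 2))
        = ∫ x in (0:ℝ)..1,
            Real.exp (β - ‖zi ((η₁ - η₀) * x + η₀) - zj ((η₁ - η₀) * x + η₀)‖ ^ 2) := by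
      apply intervalIntegral.integral_congr
      intro s hs
      rw [Set.uIcc_of_le (by norm_num : (0:ℝ) ≤ 1)] at hs
      have haff : (η₁ - η₀) * s + η₀ = (1 - s) * η₀ + s * η₁ := by ring
      simp only [haff, hzi s hs, hzj s hs]
      have hd2 : (1 - s) • zi η₀ + s • zi η₁ - ((1 - s) • zj η₀ + s • zj η₁)
          = (1 - s) • Δ₀ + s • Δ₁ := by
        rw [hΔ₀, hΔ₁, smul_sub, smul_sub]; abel
      rw [hd2, hquad s]
      ring_nf
    rw [hcong, this]
    field_simp
  -- step B : Gaussian CDF difference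
  have hgauss : ∀ u : ℝ, Real.exp (-u ^ 2 / 2) = Real.exp (-(1/2 : ℝ) * u ^ 2) := by
    intro u; ring_nf
  have hint : Integrable (fun u : ℝ => Real.exp (-u ^ 2 / 2)) := by
    simp only [hgauss]
    exact integrable_exp_neg_mul_sq (by norm_num)
  have hB : stdNormalCDF ((1 - μ) / σ) - stdNormalCDF (-μ / σ)
      = (Real.sqrt (2 * Real.pi))⁻¹ *
        ∫ u in (-μ / σ)..((1 - μ) / σ), Real.exp (-u ^ 2 / 2) := by
    unfold stdNormalCDF
    rw [← mul_sub]
    congr 1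
    exact intervalIntegral.integral_Iic_sub_Iic hint.integrableOn hint.integrableOn
  -- step B' : substitution u = (s - μ)/σ
  have hB' : (∫ s in (0:ℝ)..1, Real.exp (-c * (s - μ) ^ 2))
      = σ * ∫ u in (-μ / σ)..((1 - μ) / σ), Real.exp (-u ^ 2 / 2) := by
    have := intervalIntegral.integral_comp_mul_sub (a := 0) (b := 1)
      (fun u => Real.exp (-u ^ 2 / 2)) (inv_ne_zero hσpos.ne') (μ / σ)
    rw [inv_inv, smul_eq_mul] at this
    have hb0 : σ⁻¹ * 0 - μ / σ = -μ / σ := by field_simp; ring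
    have hb1 : σ⁻¹ * 1 - μ / σ = (1 - μ) / σ := by field_simp
    rw [hb0, hb1] at this
    rw [← this]
    apply intervalIntegral.integral_congr
    intro s _
    show Real.exp (-c * (s - μ) ^ 2) = Real.exp (-(σ⁻¹ * s - μ / σ) ^ 2 / 2)
    congr 1
    have h1 : σ⁻¹ * s - μ / σ = (s - μ) / σ := by field_simp
    rw [h1, div_pow, hσsq]
    field_simp
  -- combine
  rw [hA]
  have hsplit : (∫ s in (0:ℝ)..1, Real.exp (β - a - c * (s - μ) ^ 2))
      = Real.exp (β - a) * ∫ s in (0:ℝ)..1, Real.exp (-c * (s - μ) ^ 2) := by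
    rw [← intervalIntegral.integral_const_mul]
    apply intervalIntegral.integral_congr
    intro s _
    simp only [← Real.exp_add]
    congr 1
    ring
  rw [hsplit, hB', hB]
  have hsqrt : Real.sqrt (2 * Real.pi) * (Real.sqrt (2 * Real.pi))⁻¹ = 1 :=
    mul_inv_cancel₀ (by positivity)
  field_simp
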